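/- For every w with w_l ≤ w ≤ w_u, the measure θ^w belongs to I, w_{θ^w} = w, and the constant function ζ(t) = θ^w for all t ≥ 0 is a fluid model solution with initial measure θ^w; i.e., θ^w is an invariant state of the fluid model. -/

import Mathlib

open MeasureTheory Set Filter Topology
open scoped ENNReal

noncomputable section

namespace OverloadedFIFO

/-- The complement `G(x) = Γ((x, ∞))` of the cumulative distribution function of `Γ`. -/
def Gk (Γ : MeasureTheory.Measure ℝ) (x : ℝ) : ℝ := (Γ (Set.Ioi x)).toReal

/-- Model data: `K` job classes with arrival rates `lam`, service rates `mu`, and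
deadline (patience) distributions `Γ`, in the overloaded regime `ρ > 1`.  Each `Γ k` is a
Borel probability measure on `[0,∞)` (no mass on negatives), with continuous c.d.f.
(no atoms, in particular `Γ k {0} = 0`) and finite mean. -/
structure Data (K : ℕ) where
  lam : Fin K → ℝ
  mu : Fin K → ℝ
  Γ : Fin K → MeasureTheory.Measure ℝ
  lam_pos : ∀ k, 0 < lam k
  mu_pos : ∀ k, 0 < mu k
  Γ_prob : ∀ k, MeasureTheory.IsProbabilityMeasure (Γ k)
  Γ_null_neg : ∀ k, Γ k (Set.Iio 0) = 0
  Γ_noAtom : ∀ k, ∀ x : ℝ, Γ k {x} = 0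
  Γ_finite_mean : ∀ k, MeasureTheory.Integrable id (Γ k)
  rho_gt_one : 1 < ∑ k, lam k / mu k

instance {K : ℕ} (D : Data K) (k : Fin K) : IsProbabilityMeasure (D.Γ k) := D.Γ_prob k

/-- `ρ_k = λ_k / μ_k`. -/
def Data.rho {K : ℕ} (D : Data K) (k : Fin K) : ℝ := D.lam k / D.mu k

/-- `ρ = Σ_k ρ_k`. -/
def Data.rhoTot {K : ℕ} (D : Data K) : ℝ := ∑ k, D.rho k

/-- A workload fluid model solution: a nonnegative function `w` on `[0,∞)` satisfying
`w(t) = w(0) + Σ_k ρ_k ∫_0^t G_k(w(s)) ds − t` for all `t ≥ 0`. -/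
def IsWorkloadSol {K : ℕ} (D : Data K) (w : ℝ → ℝ) : Prop :=
  (∀ t : ℝ, 0 ≤ t → 0 ≤ w t) ∧
  (∀ k : Fin K, ∀ t : ℝ, 0 ≤ t →
    IntervalIntegrable (fun s => Gk (D.Γ k) (w s)) volume 0 t) ∧
  (∀ t : ℝ, 0 ≤ t →
    w t = w 0 + (∑ k, D.rho k * ∫ s in (0:ℝ)..t, Gk (D.Γ k) (w s)) - t)

/-- `w_l = sup {u ≥ 0 : Σ_k ρ_k G_k(u) > 1}`. -/
def wl {K : ℕ} (D : Data K) : ℝ :=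
  sSup {u : ℝ | 0 ≤ u ∧ 1 < ∑ k, D.rho k * Gk (D.Γ k) u}

/-- `w_u = sup {u ≥ 0 : Σ_k ρ_k G_k(u) ≥ 1}`. -/
def wu {K : ℕ} (D : Data K) : ℝ :=
  sSup {u : ℝ | 0 ≤ u ∧ 1 ≤ ∑ k, D.rho k * Gk (D.Γ k) u}

/-- `d_max = max_k sup {x ≥ 0 : G_k(x) > 0} ∈ (0,∞]`, as an extended nonnegative real. -/
def dmax {K : ℕ} (D : Data K) : ℝ≥0∞ :=
  ⨆ k, sSup (ENNReal.ofReal '' {x : ℝ | 0 ≤ x ∧ 0 < Gk (D.Γ k) x})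

/-- `τ(t) = inf {s ∈ [0,t] : w(s) + s ≥ t}`. -/
def tauF (w : ℝ → ℝ) (t : ℝ) : ℝ := sInf {s : ℝ | 0 ≤ s ∧ s ≤ t ∧ t ≤ w s + s}

/-- The nonnegative quadrant `[0,∞)²`. -/
def Q : Set (ℝ × ℝ) := {p | 0 ≤ p.1 ∧ 0 ≤ p.2}

/-- The shift `B_x = {y ∈ [0,∞)² : y − x ∈ B}` of a set `B ⊆ [0,∞)²`. -/
def shift (B : Set (ℝ × ℝ)) (x : ℝ × ℝ) : Set (ℝ × ℝ) :=
  {y | y ∈ Q ∧ (y.1 - x.1, y.2 - x.2) ∈ B}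

/-- Diagonal shift `B_t = B_{(t,t)}`. -/
def shiftd (B : Set (ℝ × ℝ)) (t : ℝ) : Set (ℝ × ℝ) := shift B (t, t)

/-- The set `C = ([0,∞)×{0}) ∪ ({0}×[0,∞))`. -/
def Cset : Set (ℝ × ℝ) := {p | (0 ≤ p.1 ∧ p.2 = 0) ∨ (p.1 = 0 ∧ 0 ≤ p.2)}

/-- The `κ`-enlargement `B^κ = {x ∈ [0,∞)² : inf_{y ∈ B} ‖x−y‖ < κ}` (Euclidean norm). -/
def enlarge (B : Set (ℝ × ℝ)) (κ : ℝ) : Set (ℝ × ℝ) :=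
  {x | x ∈ Q ∧ ∃ y ∈ B, Real.sqrt ((x.1 - y.1) ^ 2 + (x.2 - y.2) ^ 2) < κ}

/-- `w_ϑ = sup {x ≥ 0 : ϑ_+([x,∞)×[0,∞)) > 0}` for a `K`-tuple `ϑ` of measures on `[0,∞)²`. -/
def wMeas {K : ℕ} (ϑ : Fin K → MeasureTheory.Measure (ℝ × ℝ)) : ℝ :=
  sSup {x : ℝ | 0 ≤ x ∧ 0 < ∑ k, ϑ k (Set.Ici x ×ˢ Set.Ici (0:ℝ))}

/-- Membership in the set `I` of admissible initial measures: each `ϑ k` is a finite Borel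
measure on `[0,∞)²`; (I.1) the superposition charges no corner set `C_x`, `x ∈ [0,∞)²`;
(I.2) `w_ϑ < ∞`; (I.3) `max_k G_k(w_ϑ − ε) > 0` for every `ε > 0`. -/
def MemI {K : ℕ} (D : Data K) (ϑ : Fin K → MeasureTheory.Measure (ℝ × ℝ)) : Prop :=
  (∀ k, IsFiniteMeasure (ϑ k)) ∧
  (∀ k, ϑ k Qᶜ = 0) ∧
  (∀ x ∈ Q, (∑ k, ϑ k (shift Cset x)) = 0) ∧
  BddAbove {x : ℝ | 0 ≤ x ∧ 0 < ∑ k, ϑ k (Set.Ici x ×ˢ Set.Ici (0:ℝ))} ∧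
  (∀ ε : ℝ, 0 < ε → ∃ k, 0 < Gk (D.Γ k) (wMeas ϑ - ε))

/-- `δ⁺_w`: the Dirac measure at `w` if `w > 0`, and the zero measure otherwise. -/
def deltaPlus (w : ℝ) : MeasureTheory.Measure ℝ :=
  if 0 < w then MeasureTheory.Measure.dirac w else 0

instance (w : ℝ) : SFinite (deltaPlus w) := by
  unfold deltaPlus; split_ifs <;> infer_instance

/-- `(δ⁺_w × Γ)(B)`, as a real number. -/
def kern (Γ : MeasureTheory.Measure ℝ) (w : ℝ) (B : Set (ℝ × ℝ)) : ℝ :=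
  (((deltaPlus w).prod Γ) B).toReal

/-- A (measure-valued) fluid model solution with initial measure `ϑ`: a family
`ζ(t) = (ζ_1(t),…,ζ_K(t))` of finite Borel measures on `[0,∞)²` with `ζ(0) = ϑ` satisfying
`ζ_k(t)(B) = ϑ_k(B_t) + λ_k ∫_0^t (δ⁺_{w(s)} × Γ_k)(B_{t−s}) ds` for every Borel
`B ⊆ [0,∞)²` and `t ≥ 0`, where `w` is the (unique) workload fluid model solution with
`w(0) = w_ϑ`. -/
def IsFluidSol {K : ℕ} (D : Data K) (ϑ : Fin K → MeasureTheory.Measure (ℝ × ℝ))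
    (ζ : ℝ → Fin K → MeasureTheory.Measure (ℝ × ℝ)) : Prop :=
  ∃ w : ℝ → ℝ, IsWorkloadSol D w ∧ w 0 = wMeas ϑ ∧
    (∀ t : ℝ, 0 ≤ t → ∀ k, IsFiniteMeasure (ζ t k) ∧ ζ t k Qᶜ = 0) ∧
    (∀ k, ζ 0 k = ϑ k) ∧
    (∀ k, ∀ B : Set (ℝ × ℝ), B ⊆ Q → MeasurableSet B → ∀ t : ℝ, 0 ≤ t →
      IntervalIntegrable (fun s => kern (D.Γ k) (w s) (shiftd B (t - s))) volume 0 t ∧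
      ζ t k B = ϑ k (shiftd B t) +
        ENNReal.ofReal (D.lam k * ∫ s in (0:ℝ)..t, kern (D.Γ k) (w s) (shiftd B (t - s))))

/-- The candidate invariant state `θ^w`:
`θ^w_k(B) = λ_k ∫_0^w Γ_k({p ≥ u : (w−u, p−u) ∈ B}) du`. -/
def thetaW {K : ℕ} (D : Data K) (w : ℝ) (k : Fin K) : MeasureTheory.Measure (ℝ × ℝ) :=
  ENNReal.ofReal (D.lam k) •
    MeasureTheory.Measure.map (fun up : ℝ × ℝ => (w - up.1, up.2 - up.1))
      ((((MeasureTheory.volume.restrict (Set.Ioo (0:ℝ) w))).prod (D.Γ k)).restrict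
        {up : ℝ × ℝ | up.1 ≤ up.2})

/-! For `w_l ≤ w ≤ w_u` continuity of the `G_k` gives `Σ_k ρ_k G_k(w) = 1`: the work that arrives
with patience above `w`, the only work that enters service while the workload is `w`, exactly
matches the unit service rate, so the constant workload `w` solves the workload equation.
In `θ^w` a job that arrived `u < w` time units ago with patience `p ≥ u` sits at
`(w - u, p - u)`. Running the dynamics for time `t` moves each job by `(-t, -t)`, removes those
leaving the quadrant (entering service or abandoning), and adds the jobs of ages in `(0, t]`;
since `θ^w` is the image of a translation-invariant age profile, these two effects cancel. -/

open ProbabilityTheory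

section Tail

variable {Γ : Measure ℝ}

lemma Gk_nonneg (x : ℝ) : 0 ≤ Gk Γ x := ENNReal.toReal_nonneg

variable [IsProbabilityMeasure Γ]

lemma Gk_eq_one_sub_cdf (x : ℝ) : Gk Γ x = 1 - cdf Γ x := by
  rw [cdf_eq_real, ← probReal_compl_eq_one_sub measurableSet_Iic, compl_Iic]
  rfl

lemma Gk_antitone : Antitone (Gk Γ) := fun x y hxy => by
  simp only [Gk_eq_one_sub_cdf]
  linarith [monotone_cdf Γ hxy]

lemma tendsto_Gk_atTop : Tendsto (Gk Γ) atTop (𝓝 0) := by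
  rw [show Gk Γ = _ from funext Gk_eq_one_sub_cdf, ← sub_self 1]
  exact (tendsto_cdf_atTop Γ).const_sub 1

lemma Gk_zero [NullSingletonClass Γ] (hneg : Γ (Iio 0) = 0) : Gk Γ 0 = 1 := by
  have : Γ (Iic 0) = 0 := by rw [← Iio_union_right, measure_union_null hneg (measure_singleton 0)]
  rw [Gk_eq_one_sub_cdf, cdf_eq_real, measureReal_def, this, ENNReal.toReal_zero, sub_zero]

lemma continuous_cdf [NullSingletonClass Γ] : Continuous (cdf Γ) := by
  refine continuous_iff_continuousAt.2 fun x =>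
    (monotone_cdf Γ).continuousAt_iff_leftLim_eq_rightLim.2 ?_
  have h := (cdf Γ).measure_singleton x
  rw [measure_cdf, measure_singleton, eq_comm, ENNReal.ofReal_eq_zero, sub_nonpos] at h
  rw [StieltjesFunction.rightLim_eq]
  exact le_antisymm ((monotone_cdf Γ).leftLim_le le_rfl) h

lemma continuous_Gk [NullSingletonClass Γ] : Continuous (Gk Γ) := by
  rw [show Gk Γ = _ from funext Gk_eq_one_sub_cdf]
  exact continuous_const.sub continuous_cdf

end Tail

section LevelSets

variable {f : ℝ → ℝ} {c w : ℝ}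

lemma bddAbove_setOf_le_of_antitone (hf : Antitone f) {M : ℝ} (hM : f M < c) :
    BddAbove {u | 0 ≤ u ∧ c ≤ f u} :=
  ⟨M, fun _ hu => le_of_not_gt fun hMu => (hM.trans_le hu.2).not_ge (hf hMu.le)⟩

lemma apply_eq_of_sSup_le_of_le_sSup (hf : Antitone f) (hcont : Continuous f)
    (h0 : c < f 0) {M : ℝ} (hM : f M < c)
    (h₁ : sSup {u | 0 ≤ u ∧ c < f u} ≤ w) (h₂ : w ≤ sSup {u | 0 ≤ u ∧ c ≤ f u}) : f w = c := by
  have hbdd_le := bddAbove_setOf_le_of_antitone hf hM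
  have hbdd_lt : BddAbove {u | 0 ≤ u ∧ c < f u} := hbdd_le.mono fun _ => And.imp_right le_of_lt
  refine le_antisymm ?_ ?_
  · by_contra! hlt
    have hw0 : 0 ≤ w := (le_csSup hbdd_lt ⟨le_rfl, h0⟩).trans h₁
    obtain ⟨v, hv, hwv⟩ := ((eventually_nhdsWithin_of_eventually_nhds
      ((hcont.tendsto w).eventually (lt_mem_nhds hlt))).and
      (self_mem_nhdsWithin : Ioi w ∈ 𝓝[>] w)).exists
    have hv_le : v ≤ w := (le_csSup hbdd_lt ⟨hw0.trans (le_of_lt hwv), hv⟩).trans h₁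
    exact hv_le.not_gt hwv
  · have hclosed : IsClosed {u | 0 ≤ u ∧ c ≤ f u} :=
      (isClosed_le continuous_const continuous_id).inter (isClosed_le continuous_const hcont)
    exact (hclosed.csSup_mem ⟨0, le_rfl, h0.le⟩ hbdd_le).2.trans (hf h₂)

end LevelSets

namespace Data

variable {K : ℕ} (D : Data K)

instance (k : Fin K) : NullSingletonClass (D.Γ k) := ⟨D.Γ_noAtom k⟩

/-- The rate at which work arrives whose patience exceeds `u`. -/
def load (u : ℝ) : ℝ := ∑ k, D.rho k * Gk (D.Γ k) u

lemma rho_pos (k : Fin K) : 0 < D.rho k := div_pos (D.lam_pos k) (D.mu_pos k)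

lemma antitone_load : Antitone D.load := fun _ _ hxy =>
  Finset.sum_le_sum fun k _ => mul_le_mul_of_nonneg_left (Gk_antitone hxy) (D.rho_pos k).le

lemma continuous_load : Continuous D.load :=
  continuous_finsetSum _ fun _ _ => continuous_const.mul continuous_Gk

lemma one_lt_load_zero : 1 < D.load 0 := by
  simpa [load, Gk_zero (D.Γ_null_neg _), Data.rho] using D.rho_gt_one

lemma exists_load_lt_one : ∃ M, D.load M < 1 := by
  have h : Tendsto D.load atTop (𝓝 (∑ k, D.rho k * 0)) :=
    tendsto_finsetSum _ fun _ _ => tendsto_Gk_atTop.const_mul _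
  rw [Finset.sum_eq_zero fun _ _ => mul_zero _] at h
  exact (h.eventually_lt_const one_pos).exists

lemma load_eq_one {w : ℝ} (h₁ : wl D ≤ w) (h₂ : w ≤ wu D) : D.load w = 1 :=
  apply_eq_of_sSup_le_of_le_sSup D.antitone_load D.continuous_load D.one_lt_load_zero
    D.exists_load_lt_one.choose_spec h₁ h₂

lemma pos_of_load_eq_one {w : ℝ} (hw : D.load w = 1) : 0 < w :=
  lt_of_not_ge fun h => (D.one_lt_load_zero.trans_le (D.antitone_load h)).ne' hw

lemma exists_Gk_pos_of_load_eq_one {w : ℝ} (hw : D.load w = 1) : ∃ k, 0 < Gk (D.Γ k) w := by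
  obtain ⟨k, -, hk⟩ := Finset.exists_ne_zero_of_sum_ne_zero (hw.trans_ne one_ne_zero)
  exact ⟨k, (Gk_nonneg _).lt_of_ne' (right_ne_zero_of_mul hk)⟩

lemma isWorkloadSol_const {w : ℝ} (hw : D.load w = 1) : IsWorkloadSol D fun _ => w := by
  refine ⟨fun _ _ => (D.pos_of_load_eq_one hw).le, fun _ _ _ => intervalIntegrable_const,
    fun t _ => ?_⟩
  simp only [intervalIntegral.integral_const, smul_eq_mul, sub_zero, mul_left_comm _ t,
    ← Finset.mul_sum]
  rw [show ∑ k, D.rho k * Gk (D.Γ k) w = 1 from hw]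
  ring

end Data

lemma measurableSet_Q : MeasurableSet Q :=
  (measurableSet_le measurable_const measurable_fst).inter
    (measurableSet_le measurable_const measurable_snd)

lemma measurableSet_shift {B : Set (ℝ × ℝ)} (hB : MeasurableSet B) (x : ℝ × ℝ) :
    MeasurableSet (shift B x) :=
  measurableSet_Q.inter
    (((measurable_fst.sub measurable_const).prodMk (measurable_snd.sub measurable_const)) hB)

lemma shiftd_subset_Q (B : Set (ℝ × ℝ)) (t : ℝ) : shiftd B t ⊆ Q := fun _ hy => hy.1

section Theta

variable {K : ℕ} (D : Data K) (w : ℝ) (k : Fin K)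

lemma measurable_thetaW_map : Measurable fun up : ℝ × ℝ => (w - up.1, up.2 - up.1) :=
  (measurable_const.sub measurable_fst).prodMk (measurable_snd.sub measurable_fst)

lemma thetaW_apply {B : Set (ℝ × ℝ)} (hB : MeasurableSet B) :
    thetaW D w k B = ENNReal.ofReal (D.lam k) *
      ∫⁻ u in Ioo 0 w, D.Γ k {p | (w - u, p - u) ∈ B ∧ u ≤ p} := by
  have hpre := measurable_thetaW_map w hB
  rw [thetaW, Measure.smul_apply, smul_eq_mul, Measure.map_apply (measurable_thetaW_map w) hB,
    Measure.restrict_apply hpre,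
    Measure.prod_apply (hpre.inter (measurableSet_le measurable_fst measurable_snd))]
  rfl

lemma thetaW_eq_zero {B : Set (ℝ × ℝ)} (hB : MeasurableSet B)
    (h : ∀ᵐ u ∂volume.restrict (Ioo 0 w), D.Γ k {p | (w - u, p - u) ∈ B ∧ u ≤ p} = 0) :
    thetaW D w k B = 0 := by
  rw [thetaW_apply D w k hB, lintegral_congr_ae h, lintegral_zero, mul_zero]

instance isFiniteMeasure_thetaW : IsFiniteMeasure (thetaW D w k) :=
  ⟨by rw [thetaW, Measure.smul_apply, smul_eq_mul]
      exact ENNReal.mul_lt_top ENNReal.ofReal_lt_top (measure_lt_top _ _)⟩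

lemma thetaW_compl_Q : thetaW D w k Qᶜ = 0 := by
  refine thetaW_eq_zero D w k measurableSet_Q.compl
    (ae_restrict_of_forall_mem measurableSet_Ioo fun u hu => ?_)
  convert measure_empty (μ := D.Γ k)
  refine eq_empty_of_forall_notMem fun p ⟨hp, hup⟩ => hp ⟨?_, ?_⟩
  · exact sub_nonneg.2 hu.2.le
  · exact sub_nonneg.2 hup

lemma thetaW_horizontal (c : ℝ) : thetaW D w k {y | y.2 = c} = 0 :=
  thetaW_eq_zero D w k (measurable_snd (measurableSet_singleton c)) <|
    Eventually.of_forall fun u => measure_mono_null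
      (fun p (hp : p - u = c ∧ u ≤ p) => show p = u + c by linarith [hp.1])
      (measure_singleton (u + c))

lemma thetaW_vertical (c : ℝ) : thetaW D w k {y | y.1 = c} = 0 := by
  refine thetaW_eq_zero D w k (measurable_fst (measurableSet_singleton c)) ?_
  filter_upwards [ae_restrict_of_ae (compl_mem_ae_iff.2 (measure_singleton (w - c)))] with u hu
  convert measure_empty (μ := D.Γ k)
  exact eq_empty_of_forall_notMem fun p (hp : w - u = c ∧ u ≤ p) =>
    hu (mem_singleton_iff.2 (by linarith [hp.1]))

lemma thetaW_shift_Cset (x : ℝ × ℝ) : thetaW D w k (shift Cset x) = 0 := by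
  refine measure_mono_null ?_
    (measure_union_null (thetaW_horizontal D w k x.2) (thetaW_vertical D w k x.1))
  rintro y ⟨-, ⟨-, hy⟩ | ⟨hy, -⟩⟩
  · exact Or.inl (sub_eq_zero.1 hy)
  · exact Or.inr (sub_eq_zero.1 hy)

lemma thetaW_Ici_prod_eq_zero {x : ℝ} (hx : w < x) : thetaW D w k (Ici x ×ˢ Ici 0) = 0 := by
  refine thetaW_eq_zero D w k (measurableSet_Ici.prod measurableSet_Ici)
    (ae_restrict_of_forall_mem measurableSet_Ioo fun u hu => ?_)
  convert measure_empty (μ := D.Γ k)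
  exact eq_empty_of_forall_notMem fun p hp => by
    linarith [show x ≤ w - u from hp.1.1, hu.1]

lemma thetaW_Ici_prod_pos {x : ℝ} (hx0 : 0 ≤ x) (hxw : x < w) (hk : 0 < Gk (D.Γ k) w) :
    0 < thetaW D w k (Ici x ×ˢ Ici 0) := by
  rw [thetaW_apply D w k (measurableSet_Ici.prod measurableSet_Ici)]
  refine ENNReal.mul_pos (ENNReal.ofReal_pos.2 (D.lam_pos k)).ne' (ne_of_gt ?_)
  calc 0 < D.Γ k (Ioi w) * volume (Ioo 0 (w - x)) :=
        ENNReal.mul_pos (ENNReal.toReal_pos_iff.1 hk).1.ne' (by simp [hxw])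
    _ = ∫⁻ _ in Ioo 0 (w - x), D.Γ k (Ioi w) := (setLIntegral_const _ _).symm
    _ ≤ ∫⁻ u in Ioo 0 (w - x), D.Γ k {p | (w - u, p - u) ∈ Ici x ×ˢ Ici 0 ∧ u ≤ p} :=
        setLIntegral_mono' measurableSet_Ioo fun u hu => measure_mono fun p (hp : w < p) =>
          ⟨⟨show x ≤ w - u by linarith [hu.2], show 0 ≤ p - u by linarith [hu.2]⟩,
            by linarith [hu.2]⟩
    _ ≤ _ := lintegral_mono_set (Ioo_subset_Ioo le_rfl (by linarith))

end Theta

section Workload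

variable {K : ℕ} (D : Data K) {w : ℝ}

lemma mem_upperBounds_thetaW :
    w ∈ upperBounds {x | 0 ≤ x ∧ 0 < ∑ k, thetaW D w k (Ici x ×ˢ Ici 0)} :=
  fun _ hx => le_of_not_gt fun h =>
    hx.2.ne' (Finset.sum_eq_zero fun k _ => thetaW_Ici_prod_eq_zero D w k h)

lemma wMeas_thetaW (hw : 0 < w) (hk : ∃ k, 0 < Gk (D.Γ k) w) : wMeas (thetaW D w) = w := by
  obtain ⟨k, hk⟩ := hk
  have hIco : Ico 0 w ⊆ {x | 0 ≤ x ∧ 0 < ∑ j, thetaW D w j (Ici x ×ˢ Ici 0)} :=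
    fun x hx => ⟨hx.1, (thetaW_Ici_prod_pos D w k hx.1 hx.2 hk).trans_le
      (Finset.single_le_sum (f := fun j => thetaW D w j (Ici x ×ˢ Ici 0))
        (fun _ _ => zero_le) (Finset.mem_univ k))⟩
  exact ((isLUB_Ico hw).of_subset_of_superset isLUB_Iic hIco (mem_upperBounds_thetaW D)).csSup_eq
    ⟨0, hIco ⟨le_rfl, hw⟩⟩

lemma memI_thetaW (hw : 0 < w) (hk : ∃ k, 0 < Gk (D.Γ k) w) : MemI D (thetaW D w) := by
  refine ⟨fun _ => inferInstance, fun k => thetaW_compl_Q D w k,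
    fun x _ => Finset.sum_eq_zero fun k _ => thetaW_shift_Cset D w k x,
    ⟨w, mem_upperBounds_thetaW D⟩, fun ε hε => ?_⟩
  obtain ⟨k, hk⟩ := hk
  exact ⟨k, hk.trans_le (Gk_antitone (by rw [wMeas_thetaW D hw ⟨k, hk⟩]; linarith))⟩

end Workload

/-- In the state `θ^w`, a job that arrived `u` time units ago with patience `p` still has to
wait `w - u` and has residual patience `p - u`. -/
def arrivalSlice (Γ : Measure ℝ) (w : ℝ) (B : Set (ℝ × ℝ)) (u : ℝ) : ℝ≥0∞ :=
  Γ {p | (w - u, p - u) ∈ B}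

section ArrivalSlice

variable {Γ : Measure ℝ} {w : ℝ} {B : Set (ℝ × ℝ)}

lemma measurable_arrivalSlice [SFinite Γ] (hB : MeasurableSet B) :
    Measurable (arrivalSlice Γ w B) :=
  measurable_measure_prodMk_left (measurable_thetaW_map w hB)

lemma arrivalSlice_eq_zero (hBQ : B ⊆ Q) {u : ℝ} (hu : w < u) : arrivalSlice Γ w B u = 0 := by
  refine measure_mono_null (fun p (hp : (w - u, p - u) ∈ B) => ?_) measure_empty
  exact (sub_neg.2 hu).not_ge (hBQ hp).1

lemma arrivalSlice_shiftd (hBQ : B ⊆ Q) {t : ℝ} (ht : 0 ≤ t) (u : ℝ) :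
    arrivalSlice Γ w (shiftd B t) u = arrivalSlice Γ w B (u + t) := by
  refine congrArg Γ (ext fun p => ?_)
  simp only [shiftd, shift, mem_ofPred_eq, sub_sub]
  refine and_iff_right_of_imp fun hp => ?_
  obtain ⟨h1, h2⟩ := hBQ hp
  exact ⟨by dsimp only at h1 ⊢; linarith, by dsimp only at h2 ⊢; linarith⟩

lemma kern_shiftd [SFinite Γ] (hw : 0 < w) (hneg : Γ (Iio 0) = 0) (r : ℝ) :
    kern Γ w (shiftd B r) = (arrivalSlice Γ w B r).toReal := by
  rw [kern, deltaPlus, if_pos hw, Measure.dirac_prod,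
    (measurableEmbedding_prodMk_left w).map_apply]
  have hpre : Prod.mk w ⁻¹' shiftd B r = {p | (w - r, p - r) ∈ B} ∩ Ici 0 := by
    ext p
    simp [shiftd, shift, Q, hw.le, and_comm]
  rw [hpre, measure_inter_conull (by rwa [compl_Ici])]
  rfl

lemma intervalIntegral_kern_shiftd [IsProbabilityMeasure Γ] (hw : 0 < w)
    (hneg : Γ (Iio 0) = 0) (hB : MeasurableSet B) {t : ℝ} (ht : 0 ≤ t) :
    IntervalIntegrable (fun s => kern Γ w (shiftd B (t - s))) volume 0 t ∧
      ENNReal.ofReal (∫ s in (0:ℝ)..t, kern Γ w (shiftd B (t - s))) =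
        ∫⁻ u in Ioc 0 t, arrivalSlice Γ w B u := by
  simp_rw [kern_shiftd hw hneg]
  have hf : AEMeasurable (arrivalSlice Γ w B) (volume.restrict (Ioc 0 t)) :=
    (measurable_arrivalSlice hB).aemeasurable
  have hfin : ∫⁻ u in Ioc 0 t, arrivalSlice Γ w B u ≠ ∞ :=
    ((lintegral_mono fun _ => prob_le_one).trans_lt
      ((setLIntegral_one _).trans_lt measure_Ioc_lt_top)).ne
  have hint : IntervalIntegrable (fun u => (arrivalSlice Γ w B u).toReal) volume 0 t :=
    (intervalIntegrable_iff_integrableOn_Ioc_of_le ht).2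
      (integrable_toReal_of_lintegral_ne_top hf hfin)
  refine ⟨by simpa using (hint.comp_sub_left t).symm, ?_⟩
  rw [intervalIntegral.integral_comp_sub_left (fun u => (arrivalSlice Γ w B u).toReal),
    sub_self, sub_zero, intervalIntegral.integral_of_le ht,
    integral_toReal hf (Eventually.of_forall fun _ => prob_le_one.trans_lt ENNReal.one_lt_top),
    ENNReal.ofReal_toReal hfin]

end ArrivalSlice

lemma setLIntegral_Ioi_zero_eq_shift_add (f : ℝ → ℝ≥0∞) {t : ℝ} (ht : 0 ≤ t) :
    ∫⁻ u in Ioi 0, f u = (∫⁻ u in Ioi 0, f (u + t)) + ∫⁻ u in Ioc 0 t, f u := by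
  rw [(measurePreserving_add_right volume t).setLIntegral_comp_emb
      (measurableEmbedding_addRight t) f (Ioi 0), image_add_const_Ioi, zero_add,
    ← Ioc_union_Ioi_eq_Ioi ht, lintegral_union measurableSet_Ioi (Ioc_disjoint_Ioi le_rfl),
    add_comm]

section FluidEquation

variable {K : ℕ} (D : Data K) {w : ℝ} (k : Fin K) {B : Set (ℝ × ℝ)}

lemma thetaW_apply_of_subset_Q (hw : 0 ≤ w) (hB : MeasurableSet B) (hBQ : B ⊆ Q) :
    thetaW D w k B = ENNReal.ofReal (D.lam k) * ∫⁻ u in Ioi 0, arrivalSlice (D.Γ k) w B u := by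
  have hslice : ∀ u, {p | (w - u, p - u) ∈ B ∧ u ≤ p} = {p | (w - u, p - u) ∈ B} :=
    fun u => ext fun p => and_iff_left_of_imp fun hp => sub_nonneg.1 (hBQ hp).2
  rw [thetaW_apply D w k hB, ← Ioc_union_Ioi_eq_Ioi hw,
    lintegral_union measurableSet_Ioi (Ioc_disjoint_Ioi le_rfl),
    setLIntegral_congr_fun measurableSet_Ioi fun u hu => arrivalSlice_eq_zero hBQ hu,
    lintegral_zero, add_zero, Measure.restrict_congr_set Ioo_ae_eq_Ioc]
  simp_rw [hslice]
  rfl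

lemma thetaW_eq_thetaW_shiftd_add (hw : 0 ≤ w) (hB : MeasurableSet B) (hBQ : B ⊆ Q) {t : ℝ}
    (ht : 0 ≤ t) :
    thetaW D w k B = thetaW D w k (shiftd B t) +
      ENNReal.ofReal (D.lam k) * ∫⁻ u in Ioc 0 t, arrivalSlice (D.Γ k) w B u := by
  rw [thetaW_apply_of_subset_Q D k hw hB hBQ,
    thetaW_apply_of_subset_Q D k (B := shiftd B t) hw (measurableSet_shift hB _)
      (shiftd_subset_Q B t),
    setLIntegral_Ioi_zero_eq_shift_add _ ht, mul_add]
  simp_rw [arrivalSlice_shiftd hBQ ht]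

end FluidEquation

/-- For every `w ∈ [w_l, w_u]`, the measure `θ^w` belongs to `I`,
`w_{θ^w} = w`, and the constant function `ζ(t) = θ^w` is a fluid model solution with
initial measure `θ^w`; i.e. `θ^w` is an invariant state. -/
theorem thetaW_invariant {K : ℕ} (D : Data K) (w : ℝ)
    (h₁ : wl D ≤ w) (h₂ : w ≤ wu D) :
    MemI D (thetaW D w) ∧ wMeas (thetaW D w) = w ∧
    IsFluidSol D (thetaW D w) (fun _ => thetaW D w) := by
  have hload := D.load_eq_one h₁ h₂
  have hw := D.pos_of_load_eq_one hload
  have hk := D.exists_Gk_pos_of_load_eq_one hload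
  have hwMeas := wMeas_thetaW D hw hk
  refine ⟨memI_thetaW D hw hk, hwMeas, fun _ => w, D.isWorkloadSol_const hload, hwMeas.symm,
    fun _ _ k => ⟨inferInstance, thetaW_compl_Q D w k⟩, fun _ => rfl,
    fun k B hBQ hB t ht => ?_⟩
  obtain ⟨hint, hkern⟩ := intervalIntegral_kern_shiftd hw (D.Γ_null_neg k) hB ht
  refine ⟨hint, ?_⟩
  rw [ENNReal.ofReal_mul (D.lam_pos k).le, hkern]
  exact thetaW_eq_thetaW_shiftd_add D k hw.le hB hBQ ht

end OverloadedFIFO
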